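/- Let m ≥ 1 and let σ be a separable permutation of {1,…,m+1} that is alternating (a snake) and satisfies σ(m) > σ(m+1). Then there exists a monic polynomial Q ∈ ℝ[X] of degree m+2 such that its derivative Q′ has m+1 distinct real roots x_1 < x_2 < ⋯ < x_{m+1}, the critical values Q(x_1),…,Q(x_{m+1}) are pairwise distinct, and for all i, j ∈ {1,…,m+1}, Q(x_i) < Q(x_j) if and only if σ(i) < σ(j); that is, Q is an (m+2)-Morse polynomial whose Arnold snake is σ. -/

import Mathlib

/-- The direct sum `π ⊕ τ` of two permutations. -/
def permDirectSum {p q : ℕ} (π : Equiv.Perm (Fin p)) (τ : Equiv.Perm (Fin q)) :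
    Equiv.Perm (Fin (p + q)) :=
  finSumFinEquiv.symm.trans ((Equiv.sumCongr π τ).trans finSumFinEquiv)

/-- The skew sum `π ⊖ τ` of two permutations. -/
def permSkewSum {p q : ℕ} (π : Equiv.Perm (Fin p)) (τ : Equiv.Perm (Fin q)) :
    Equiv.Perm (Fin (p + q)) :=
  finSumFinEquiv.symm.trans ((Equiv.sumCongr π τ).trans
    ((Equiv.sumComm (Fin p) (Fin q)).trans (finSumFinEquiv.trans (finCongr (Nat.add_comm q p)))))

/-- Separable permutations: the smallest class containing the identity permutation of one
element and closed under direct sums and skew sums. -/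
inductive PermSeparable : {n : ℕ} → Equiv.Perm (Fin n) → Prop
  | single : PermSeparable (Equiv.refl (Fin 1))
  | dsum {p q : ℕ} {π : Equiv.Perm (Fin p)} {τ : Equiv.Perm (Fin q)} :
      PermSeparable π → PermSeparable τ → PermSeparable (permDirectSum π τ)
  | ssum {p q : ℕ} {π : Equiv.Perm (Fin p)} {τ : Equiv.Perm (Fin q)} :
      PermSeparable π → PermSeparable τ → PermSeparable (permSkewSum π τ)

/-- A permutation is alternating (a snake) iff consecutive comparisons alternate. -/
def IsAlternating {n : ℕ} (σ : Equiv.Perm (Fin n)) : Prop :=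
  ∀ i : ℕ, ∀ h2 : i + 2 < n,
    (σ ⟨i, by omega⟩ < σ ⟨i + 1, by omega⟩ ↔ σ ⟨i + 2, h2⟩ < σ ⟨i + 1, by omega⟩)


open Polynomial Filter Set



lemma mvt_bound {f f' : ℝ → ℝ} {a b c : ℝ}
    (hd : ∀ t ∈ Set.Icc a b, HasDerivAt f (f' t) t)
    (hb : ∀ t ∈ Set.Icc a b, |f' t| ≤ c)
    {x y : ℝ} (hx : x ∈ Set.Icc a b) (hy : y ∈ Set.Icc a b) :
    |f y - f x| ≤ c * |y - x| := by
  have := Convex.norm_image_sub_le_of_norm_hasDerivWithin_le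
    (fun t ht => (hd t ht).hasDerivWithinAt)
    (fun t ht => by simpa [Real.norm_eq_abs] using hb t ht)
    (convex_Icc a b) hx hy
  simpa [Real.norm_eq_abs] using this

lemma mono_of_deriv {f f' : ℝ → ℝ} {a b : ℝ}
    (hd : ∀ t, HasDerivAt f (f' t) t)
    (h0 : ∀ t ∈ Set.Icc a b, 0 ≤ f' t) : MonotoneOn f (Set.Icc a b) := by
  apply monotoneOn_of_deriv_nonneg (convex_Icc a b)
  · exact (Differentiable.continuous fun t => (hd t).differentiableAt).continuousOn
  · exact fun t _ => ((hd t).differentiableAt).differentiableWithinAt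
  · intro t ht
    rw [(hd t).deriv]
    exact h0 t (Set.mem_of_mem_of_subset ht (by rw [interior_Icc]; exact Set.Ioo_subset_Icc_self))

lemma incr_of_deriv_ge {f f' : ℝ → ℝ} {a b c : ℝ} (hab : a ≤ b)
    (hd : ∀ t, HasDerivAt f (f' t) t) (h0 : ∀ t ∈ Set.Icc a b, c ≤ f' t) :
    c * (b - a) ≤ f b - f a := by
  have hmono : MonotoneOn (fun t => f t - c * t) (Set.Icc a b) := by
    apply mono_of_deriv (f' := fun t => f' t - c)
    · intro t
      exact ((hd t).sub ((hasDerivAt_id t).const_mul c)).congr_deriv (by ring)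
    · intro t ht; have := h0 t ht; linarith
  have := hmono (Set.left_mem_Icc.mpr hab) (Set.right_mem_Icc.mpr hab) hab
  simp only at this
  linarith

lemma prod_mem_Icc {ι : Type*} [Fintype ι] (f : ι → ℝ) (lo hi : ℝ) (hlo : 0 ≤ lo)
    (h : ∀ i, f i ∈ Set.Icc lo hi) :
    (∏ i, f i) ∈ Set.Icc (lo ^ Fintype.card ι) (hi ^ Fintype.card ι) := by
  constructor
  · calc lo ^ Fintype.card ι = ∏ _i : ι, lo := by rw [Finset.prod_const, Finset.card_univ]
    _ ≤ ∏ i, f i := Finset.prod_le_prod (fun _ _ => hlo) (fun i _ => (h i).1)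
  · calc (∏ i, f i) ≤ ∏ _i : ι, hi :=
        Finset.prod_le_prod (fun i _ => le_trans hlo (h i).1) (fun i _ => (h i).2)
    _ = hi ^ Fintype.card ι := by rw [Finset.prod_const, Finset.card_univ]

lemma abs_prod_le {ι : Type*} [Fintype ι] (f : ι → ℝ) (c : ℝ)
    (h : ∀ i, |f i| ≤ c) : |∏ i, f i| ≤ c ^ Fintype.card ι := by
  rw [Finset.abs_prod]
  calc (∏ i, |f i|) ≤ ∏ _i : ι, c :=
      Finset.prod_le_prod (fun i _ => abs_nonneg _) (fun i _ => h i)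
  _ = c ^ Fintype.card ι := by rw [Finset.prod_const, Finset.card_univ]

lemma prod_ge_const {ι : Type*} [Fintype ι] (f : ι → ℝ) (c : ℝ) (hc : 0 ≤ c)
    (h : ∀ i, c ≤ f i) : c ^ Fintype.card ι ≤ ∏ i, f i := by
  calc c ^ Fintype.card ι = ∏ _i : ι, c := by rw [Finset.prod_const, Finset.card_univ]
  _ ≤ ∏ i, f i := Finset.prod_le_prod (fun _ _ => hc) (fun i _ => h i)

lemma err_tendsto (c K : ℝ) (q : ℕ) :
    Tendsto (fun R : ℝ => K * ((R + c) ^ q - (R - c) ^ q) / R ^ q) atTop (nhds 0) := by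
  have h1 : Tendsto (fun R : ℝ => c / R) atTop (nhds 0) :=
    Tendsto.div_atTop tendsto_const_nhds tendsto_id
  have hF : Continuous fun x : ℝ => K * ((1 + x) ^ q - (1 - x) ^ q) := by continuity
  have h2 : Tendsto (fun R : ℝ => K * ((1 + c / R) ^ q - (1 - c / R) ^ q)) atTop
      (nhds (K * ((1 + 0) ^ q - (1 - 0) ^ q))) := (hF.tendsto 0).comp h1
  simp only [add_zero, sub_zero, sub_self, mul_zero] at h2
  apply h2.congr'
  filter_upwards [eventually_gt_atTop (0:ℝ)] with R hR
  have hR0 : R ≠ 0 := ne_of_gt hR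
  rw [show (1 + c / R) = (R + c) / R by field_simp, show (1 - c / R) = (R - c) / R by field_simp,
    div_pow, div_pow]
  field_simp

noncomputable def pint (P : ℝ[X]) : ℝ[X] :=
  P.sum fun k a => C (a / (k+1)) * X^(k+1)

lemma derivative_pint (P : ℝ[X]) : derivative (pint P) = P := by
  unfold pint
  rw [Polynomial.sum_def, derivative_sum]
  conv_rhs => rw [← Polynomial.sum_C_mul_X_pow_eq P, Polynomial.sum_def]
  refine Finset.sum_congr rfl fun k _ => ?_
  rw [derivative_C_mul, derivative_X_pow]
  have h : ((k:ℝ)+1) ≠ 0 := by positivity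
  push_cast
  rw [← mul_assoc, ← C_mul, div_mul_cancel₀ _ h]

noncomputable def cpoly {n : ℕ} (r : Fin n → ℝ) : ℝ[X] := ∏ i, (X - C (r i))

noncomputable def vmap {n : ℕ} (r : Fin n → ℝ) (i : Fin n) : ℝ := (pint (cpoly r)).eval (r i)

lemma cpoly_eval {n : ℕ} (r : Fin n → ℝ) (t : ℝ) : (cpoly r).eval t = ∏ i, (t - r i) := by
  simp [cpoly, eval_prod]

lemma neg_pow_mul_prod {q : ℕ} (f : Fin q → ℝ) :
    (-1:ℝ)^q * ∏ j, f j = ∏ j, -f j := by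
  rw [show (fun j => -f j) = fun j => (-1:ℝ) * f j from funext fun j => by ring,
    Finset.prod_mul_distrib, Finset.prod_const, Finset.card_univ, Fintype.card_fin]

/-- derivative of evaluation of pint -/
lemma pint_hasDerivAt (P : ℝ[X]) (x : ℝ) :
    HasDerivAt (fun t => (pint P).eval t) (P.eval x) x := by
  simpa [derivative_pint] using (pint P).hasDerivAt x


def Realizes {n : ℕ} (r : Fin n → ℝ) (σ : Equiv.Perm (Fin n)) : Prop :=
  StrictMono r ∧ ∀ i j, vmap r i < vmap r j ↔ σ i < σ j

section glue

variable {p q : ℕ} (u : Fin p → ℝ) (v : Fin q → ℝ)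

lemma cpoly_append (R : ℝ) :
    cpoly (Fin.append u fun j => v j + R) = cpoly u * cpoly (fun j => v j + R) := by
  unfold cpoly
  rw [Fin.prod_univ_add]
  congr 1
  · exact Finset.prod_congr rfl fun i _ => by rw [Fin.append_left]
  · exact Finset.prod_congr rfl fun j _ => by rw [Fin.append_right]

set_option maxHeartbeats 1000000 in
lemma glue_core (hp : 1 ≤ p) (hq : 1 ≤ q) (hu : StrictMono u) (hv : StrictMono v) :
    ∀ᶠ R in Filter.atTop,
      StrictMono (Fin.append u (fun j => v j + R)) ∧
      (∀ i i' : Fin p, vmap u i < vmap u i' →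
        (-1:ℝ)^q * vmap (Fin.append u fun j => v j + R) (Fin.castAdd q i)
          < (-1:ℝ)^q * vmap (Fin.append u fun j => v j + R) (Fin.castAdd q i')) ∧
      (∀ j j' : Fin q, vmap v j < vmap v j' →
        vmap (Fin.append u fun j => v j + R) (Fin.natAdd p j)
          < vmap (Fin.append u fun j => v j + R) (Fin.natAdd p j')) ∧
      (∀ i : Fin p, ∀ j : Fin q,
        (-1:ℝ)^q * vmap (Fin.append u fun j => v j + R) (Fin.castAdd q i)
          < (-1:ℝ)^q * vmap (Fin.append u fun j => v j + R) (Fin.natAdd p j)) := by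
  classical
  set C₀ : ℝ := 1 + (∑ i, |u i|) + (∑ j, |v j|) with hC₀def
  have hsu : (0:ℝ) ≤ ∑ i, |u i| := Finset.sum_nonneg fun i _ => abs_nonneg _
  have hsv : (0:ℝ) ≤ ∑ j, |v j| := Finset.sum_nonneg fun j _ => abs_nonneg _
  have hC1 : (1:ℝ) ≤ C₀ := by rw [hC₀def]; linarith
  have hC0 : (0:ℝ) < C₀ := lt_of_lt_of_le one_pos hC1
  have hCu : ∀ i, |u i| ≤ C₀ := by
    intro i
    have := Finset.single_le_sum (f := fun i => |u i|) (fun i _ => abs_nonneg _)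
      (Finset.mem_univ i)
    rw [hC₀def]; linarith
  have hCv : ∀ j, |v j| ≤ C₀ := by
    intro j
    have := Finset.single_le_sum (f := fun j => |v j|) (fun j _ => abs_nonneg _)
      (Finset.mem_univ j)
    rw [hC₀def]; linarith
  -- part 1 : strict monotonicity
  have F1 : ∀ᶠ R in atTop, StrictMono (Fin.append u (fun j => v j + R)) := by
    filter_upwards [eventually_ge_atTop (C₀ + C₀ + 1)] with R hR
    intro a b
    induction a using Fin.addCases with
    | left i =>
      induction b using Fin.addCases with
      | left i' =>
        intro h
        rw [Fin.append_left, Fin.append_left]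
        apply hu
        rwa [Fin.lt_def, Fin.coe_castAdd, Fin.coe_castAdd, ← Fin.lt_def] at h
      | right j =>
        intro _
        rw [Fin.append_left, Fin.append_right]
        have h1 : u i ≤ |u i| := le_abs_self _
        have h2 : -|v j| ≤ v j := neg_abs_le _
        have := hCu i; have := hCv j
        linarith
    | right j =>
      induction b using Fin.addCases with
      | left i' =>
        intro h
        exfalso
        rw [Fin.lt_def, Fin.coe_natAdd, Fin.coe_castAdd] at h
        have := i'.isLt
        omega
      | right j' =>
        intro h
        rw [Fin.append_right, Fin.append_right]
        have : v j < v j' := by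
          apply hv
          rwa [Fin.lt_def, Fin.coe_natAdd, Fin.coe_natAdd, Nat.add_lt_add_iff_left,
            ← Fin.lt_def] at h
        linarith
  -- shared machinery
  have hvL : ∀ (R : ℝ) (i : Fin p), vmap (Fin.append u fun j => v j + R) (Fin.castAdd q i)
      = (pint (cpoly u * cpoly fun j => v j + R)).eval (u i) := by
    intro R i
    unfold vmap
    rw [cpoly_append, Fin.append_left]
  have hvR : ∀ (R : ℝ) (j : Fin q), vmap (Fin.append u fun j => v j + R) (Fin.natAdd p j)
      = (pint (cpoly u * cpoly fun j => v j + R)).eval (v j + R) := by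
    intro R j
    unfold vmap
    rw [cpoly_append, Fin.append_right]
  have habs_sub : ∀ x y : ℝ, |x - y| ≤ |x| + |y| := fun x y => by
    rw [sub_eq_add_neg]; exact (abs_add_le _ _).trans (by rw [abs_neg])
  have hsM : ∀ (R t : ℝ), (-1:ℝ)^q * (cpoly fun j => v j + R).eval t = ∏ j, ((v j + R) - t) := by
    intro R t
    rw [cpoly_eval, neg_pow_mul_prod]
    exact Finset.prod_congr rfl fun j _ => by ring
  have hMicc : ∀ R : ℝ, 2*C₀ ≤ R → ∀ t : ℝ, |t| ≤ C₀ →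
      (-1:ℝ)^q * (cpoly fun j => v j + R).eval t ∈ Icc ((R-2*C₀)^q) ((R+2*C₀)^q) := by
    intro R hR t ht
    rw [hsM]
    have := prod_mem_Icc (fun j => (v j + R) - t) (R-2*C₀) (R+2*C₀) (by linarith) (fun j => by
      obtain ⟨h1, h2⟩ := abs_le.mp (hCv j)
      obtain ⟨h3, h4⟩ := abs_le.mp ht
      exact ⟨by simp; linarith, by simp; linarith⟩)
    rwa [Fintype.card_fin] at this
  have hMabs : ∀ R : ℝ, 2*C₀ ≤ R → ∀ t : ℝ, |t| ≤ C₀ →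
      |(cpoly fun j => v j + R).eval t| ≤ (R+2*C₀)^q := by
    intro R hR t ht
    obtain ⟨h1, h2⟩ := hMicc R hR t ht
    have hlo : (0:ℝ) ≤ (R-2*C₀)^q := pow_nonneg (by linarith) q
    have habs : |(-1:ℝ)^q * (cpoly fun j => v j + R).eval t|
        = |(cpoly fun j => v j + R).eval t| := by
      rw [abs_mul, abs_pow, abs_neg, abs_one, one_pow, one_mul]
    rw [← habs]
    rw [abs_le]
    constructor <;> linarith
  have hMdev : ∀ R : ℝ, 2*C₀ ≤ R → ∀ t : ℝ, |t| ≤ C₀ →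
      |(-1:ℝ)^q * (cpoly fun j => v j + R).eval t - R^q| ≤ (R+2*C₀)^q - (R-2*C₀)^q := by
    intro R hR t ht
    obtain ⟨h1, h2⟩ := hMicc R hR t ht
    have hq1 : R^q ≤ (R+2*C₀)^q := pow_le_pow_left₀ (by linarith) (by linarith) q
    have hq2 : (R-2*C₀)^q ≤ R^q := pow_le_pow_left₀ (by linarith) (by linarith) q
    rw [abs_le]
    constructor <;> linarith
  have hLabs : ∀ t : ℝ, |t| ≤ C₀ → |(cpoly u).eval t| ≤ (2*C₀)^p := by
    intro t ht
    rw [cpoly_eval]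
    have := abs_prod_le (fun i => t - u i) (2*C₀) (fun i => by
      have := hCu i
      calc |t - u i| ≤ |t| + |u i| := habs_sub t (u i)
      _ ≤ 2*C₀ := by linarith)
    rwa [Fintype.card_fin] at this
  have hNabs : ∀ t : ℝ, |t| ≤ C₀ → |(cpoly v).eval t| ≤ (2*C₀)^q := by
    intro t ht
    rw [cpoly_eval]
    have := abs_prod_le (fun j => t - v j) (2*C₀) (fun j => by
      have := hCv j
      calc |t - v j| ≤ |t| + |v j| := habs_sub t (v j)
      _ ≤ 2*C₀ := by linarith)
    rwa [Fintype.card_fin] at this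
  -- F2 : left block pairs
  have F2 : ∀ᶠ R in atTop, ∀ i i' : Fin p, vmap u i < vmap u i' →
      (-1:ℝ)^q * vmap (Fin.append u fun j => v j + R) (Fin.castAdd q i)
        < (-1:ℝ)^q * vmap (Fin.append u fun j => v j + R) (Fin.castAdd q i') := by
    rw [eventually_all]
    intro i
    rw [eventually_all]
    intro i'
    by_cases hD : vmap u i < vmap u i'
    swap
    · exact Eventually.of_forall fun R h => absurd h hD
    refine Eventually.mono ?_ (fun R h _ => h)
    have hDpos : 0 < (pint (cpoly u)).eval (u i') - (pint (cpoly u)).eval (u i) :=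
      sub_pos.mpr hD
    have hT := err_tendsto (2*C₀) ((2*C₀)^p * (2*C₀)) q
    have hev1 := hT.eventually_lt_const hDpos
    filter_upwards [hev1, eventually_ge_atTop (2*C₀), eventually_gt_atTop (0:ℝ)]
      with R hR1 hR2 hR3
    rw [hvL R i, hvL R i']
    set M : ℝ[X] := cpoly (fun j => v j + R) with hM
    set E : ℝ := (R+2*C₀)^q - (R-2*C₀)^q with hE
    have hE0 : 0 ≤ E := by
      rw [hE]
      have : (R-2*C₀)^q ≤ (R+2*C₀)^q := pow_le_pow_left₀ (by linarith) (by linarith) q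
      linarith
    have key : |((-1:ℝ)^q * (pint (cpoly u * M)).eval (u i')
          - R^q * (pint (cpoly u)).eval (u i'))
        - ((-1:ℝ)^q * (pint (cpoly u * M)).eval (u i)
          - R^q * (pint (cpoly u)).eval (u i))| ≤ ((2*C₀)^p * E) * |u i' - u i| := by
      apply mvt_bound (a := -C₀) (b := C₀)
        (f := fun t => (-1:ℝ)^q * (pint (cpoly u * M)).eval t
          - R^q * (pint (cpoly u)).eval t)
        (f' := fun t => (cpoly u).eval t * ((-1:ℝ)^q * M.eval t - R^q))
      · intro t _
        have h1 := (pint_hasDerivAt (cpoly u * M) t).const_mul ((-1:ℝ)^q)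
        have h2 := (pint_hasDerivAt (cpoly u) t).const_mul (R^q)
        have := h1.sub h2
        refine this.congr_deriv ?_
        rw [eval_mul]
        ring
      · intro t ht
        rw [Set.mem_Icc] at ht
        have ht' : |t| ≤ C₀ := abs_le.mpr ht
        rw [abs_mul]
        exact mul_le_mul (hLabs t ht') (hMdev R hR2 t ht') (abs_nonneg _) (by positivity)
      · exact Set.mem_Icc.mpr (abs_le.mp (hCu i))
      · exact Set.mem_Icc.mpr (abs_le.mp (hCu i'))
    have hdiff : |u i' - u i| ≤ 2*C₀ := by
      have h1 := abs_le.mp (hCu i)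
      have h2 := abs_le.mp (hCu i')
      rw [abs_le]
      constructor <;> linarith
    have key2 : |((-1:ℝ)^q * (pint (cpoly u * M)).eval (u i')
          - R^q * (pint (cpoly u)).eval (u i'))
        - ((-1:ℝ)^q * (pint (cpoly u * M)).eval (u i)
          - R^q * (pint (cpoly u)).eval (u i))| ≤ ((2*C₀)^p * (2*C₀)) * E := by
      calc _ ≤ ((2*C₀)^p * E) * (2*C₀) :=
            key.trans (mul_le_mul_of_nonneg_left hdiff (by positivity))
      _ = ((2*C₀)^p * (2*C₀)) * E := by ring
    have hRq : (0:ℝ) < R^q := by positivity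
    have hlt : ((2*C₀)^p * (2*C₀)) * E
        < ((pint (cpoly u)).eval (u i') - (pint (cpoly u)).eval (u i)) * R^q := by
      rw [div_lt_iff₀ hRq] at hR1
      calc ((2*C₀)^p * (2*C₀)) * E = (2*C₀)^p * (2*C₀) * ((R+2*C₀)^q - (R-2*C₀)^q) := by
            rw [hE]
      _ < _ := hR1
    obtain ⟨k1, k2⟩ := abs_le.mp key2
    nlinarith [hRq]
  have hMshift : ∀ (R y : ℝ), (cpoly fun j => v j + R).eval (y + R) = (cpoly v).eval y := by
    intro R y
    rw [cpoly_eval, cpoly_eval]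
    exact Finset.prod_congr rfl fun j _ => by ring
  have hLicc : ∀ R : ℝ, 2*C₀ ≤ R → ∀ y : ℝ, |y| ≤ C₀ →
      (cpoly u).eval (y + R) ∈ Icc ((R-2*C₀)^p) ((R+2*C₀)^p) := by
    intro R hR y hy
    rw [cpoly_eval]
    have := prod_mem_Icc (fun i => (y + R) - u i) (R-2*C₀) (R+2*C₀) (by linarith) (fun i => by
      obtain ⟨h1, h2⟩ := abs_le.mp (hCu i)
      obtain ⟨h3, h4⟩ := abs_le.mp hy
      exact ⟨by simp; linarith, by simp; linarith⟩)
    rwa [Fintype.card_fin] at this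
  have hLdev : ∀ R : ℝ, 2*C₀ ≤ R → ∀ y : ℝ, |y| ≤ C₀ →
      |(cpoly u).eval (y + R) - R^p| ≤ (R+2*C₀)^p - (R-2*C₀)^p := by
    intro R hR y hy
    obtain ⟨h1, h2⟩ := hLicc R hR y hy
    have hq1 : R^p ≤ (R+2*C₀)^p := pow_le_pow_left₀ (by linarith) (by linarith) p
    have hq2 : (R-2*C₀)^p ≤ R^p := pow_le_pow_left₀ (by linarith) (by linarith) p
    rw [abs_le]
    constructor <;> linarith
  have hLshift_abs : ∀ R : ℝ, 2*C₀ ≤ R → ∀ y : ℝ, |y| ≤ C₀ →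
      |(cpoly u).eval (y + R)| ≤ (R+2*C₀)^p := by
    intro R hR y hy
    obtain ⟨h1, h2⟩ := hLicc R hR y hy
    have hlo : (0:ℝ) ≤ (R-2*C₀)^p := pow_nonneg (by linarith) p
    rw [abs_le]
    constructor <;> linarith
  have hshiftDeriv : ∀ (P : ℝ[X]) (R y : ℝ),
      HasDerivAt (fun z => (pint P).eval (z + R)) (P.eval (y + R)) y := by
    intro P R y
    have h1 := (pint_hasDerivAt P (y + R)).comp y ((hasDerivAt_id y).add_const R)
    exact h1.congr_deriv (mul_one _)
  -- F3 : right block pairs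
  have F3 : ∀ᶠ R in atTop, ∀ j j' : Fin q, vmap v j < vmap v j' →
      vmap (Fin.append u fun j => v j + R) (Fin.natAdd p j)
        < vmap (Fin.append u fun j => v j + R) (Fin.natAdd p j') := by
    rw [eventually_all]
    intro j
    rw [eventually_all]
    intro j'
    by_cases hD : vmap v j < vmap v j'
    swap
    · exact Eventually.of_forall fun R h => absurd h hD
    refine Eventually.mono ?_ (fun R h _ => h)
    have hDpos : 0 < (pint (cpoly v)).eval (v j') - (pint (cpoly v)).eval (v j) :=
      sub_pos.mpr hD
    have hT := err_tendsto (2*C₀) ((2*C₀)^q * (2*C₀)) p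
    have hev1 := hT.eventually_lt_const hDpos
    filter_upwards [hev1, eventually_ge_atTop (2*C₀), eventually_gt_atTop (0:ℝ)]
      with R hR1 hR2 hR3
    rw [hvR R j, hvR R j']
    set M : ℝ[X] := cpoly (fun j => v j + R) with hM
    set E : ℝ := (R+2*C₀)^p - (R-2*C₀)^p with hE
    have hE0 : 0 ≤ E := by
      rw [hE]
      have : (R-2*C₀)^p ≤ (R+2*C₀)^p := pow_le_pow_left₀ (by linarith) (by linarith) p
      linarith
    have key : |((pint (cpoly u * M)).eval (v j' + R) - R^p * (pint (cpoly v)).eval (v j'))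
        - ((pint (cpoly u * M)).eval (v j + R) - R^p * (pint (cpoly v)).eval (v j))|
        ≤ ((2*C₀)^q * E) * |v j' - v j| := by
      apply mvt_bound (a := -C₀) (b := C₀)
        (f := fun y => (pint (cpoly u * M)).eval (y + R) - R^p * (pint (cpoly v)).eval y)
        (f' := fun y => (cpoly v).eval y * ((cpoly u).eval (y + R) - R^p))
      · intro y _
        have h1 := hshiftDeriv (cpoly u * M) R y
        have h2 := (pint_hasDerivAt (cpoly v) y).const_mul (R^p)
        have := h1.sub h2
        refine this.congr_deriv ?_
        rw [eval_mul, hM, hMshift]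
        ring
      · intro y hy
        rw [Set.mem_Icc] at hy
        have hy' : |y| ≤ C₀ := abs_le.mpr hy
        rw [abs_mul]
        exact mul_le_mul (hNabs y hy') (hLdev R hR2 y hy') (abs_nonneg _) (by positivity)
      · exact Set.mem_Icc.mpr (abs_le.mp (hCv j))
      · exact Set.mem_Icc.mpr (abs_le.mp (hCv j'))
    have hdiff : |v j' - v j| ≤ 2*C₀ := by
      have h1 := abs_le.mp (hCv j)
      have h2 := abs_le.mp (hCv j')
      rw [abs_le]
      constructor <;> linarith
    have key2 : |((pint (cpoly u * M)).eval (v j' + R) - R^p * (pint (cpoly v)).eval (v j'))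
        - ((pint (cpoly u * M)).eval (v j + R) - R^p * (pint (cpoly v)).eval (v j))|
        ≤ ((2*C₀)^q * (2*C₀)) * E := by
      calc _ ≤ ((2*C₀)^q * E) * (2*C₀) :=
            key.trans (mul_le_mul_of_nonneg_left hdiff (by positivity))
      _ = ((2*C₀)^q * (2*C₀)) * E := by ring
    have hRp : (0:ℝ) < R^p := by positivity
    have hlt : ((2*C₀)^q * (2*C₀)) * E
        < ((pint (cpoly v)).eval (v j') - (pint (cpoly v)).eval (v j)) * R^p := by
      rw [div_lt_iff₀ hRp] at hR1
      calc ((2*C₀)^q * (2*C₀)) * E = (2*C₀)^q * (2*C₀) * ((R+2*C₀)^p - (R-2*C₀)^p) := by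
            rw [hE]
      _ < _ := hR1
    obtain ⟨k1, k2⟩ := abs_le.mp key2
    nlinarith [hRp]
  -- F4 : cross pairs
  have F4 : ∀ᶠ R in atTop, ∀ (i : Fin p) (j : Fin q),
      (-1:ℝ)^q * vmap (Fin.append u fun j => v j + R) (Fin.castAdd q i)
        < (-1:ℝ)^q * vmap (Fin.append u fun j => v j + R) (Fin.natAdd p j) := by
    set K1 : ℝ := (2*C₀)^p * (2*C₀) * 2^q with hK1
    set K2 : ℝ := (2*C₀)^q * (2*C₀) * 2^p with hK2
    have hK1n : (0:ℝ) ≤ K1 := by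
      rw [hK1]
      apply mul_nonneg (mul_nonneg (pow_nonneg (by linarith) _) (by linarith))
        (pow_nonneg (by norm_num) _)
    have hK2n : (0:ℝ) ≤ K2 := by
      rw [hK2]
      apply mul_nonneg (mul_nonneg (pow_nonneg (by linarith) _) (by linarith))
        (pow_nonneg (by norm_num) _)
    rw [eventually_all]
    intro i
    rw [eventually_all]
    intro j
    filter_upwards [eventually_ge_atTop (4*C₀+4), eventually_ge_atTop (1:ℝ),
      eventually_gt_atTop ((4:ℝ)^(p+q) * (K1 + K2))] with R hR4 hR1 hRK
    rw [hvL R i, hvR R j]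
    set M : ℝ[X] := cpoly (fun j => v j + R) with hM
    set Q : ℝ[X] := pint (cpoly u * M) with hQdef
    set s : ℝ := (-1:ℝ)^q with hs
    have hQd : ∀ t : ℝ, HasDerivAt (fun z => s * Q.eval z)
        ((∏ k, (t - u k)) * (∏ l, (v l + R - t))) t := by
      intro t
      have h1 := (pint_hasDerivAt (cpoly u * M) t).const_mul s
      refine h1.congr_deriv ?_
      rw [eval_mul, cpoly_eval u t, ← hsM R t]
      ring
    have hQd' : ∀ t : ℝ, HasDerivAt (fun z => s * Q.eval z)
        (s * ((cpoly u).eval t * M.eval t)) t := by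
      intro t
      have h1 := (pint_hasDerivAt (cpoly u * M) t).const_mul s
      simpa [eval_mul] using h1
    have gap_nonneg : ∀ t ∈ Icc C₀ (R - C₀),
        0 ≤ (∏ k, (t - u k)) * (∏ l, (v l + R - t)) := by
      intro t ht
      obtain ⟨h1, h2⟩ := ht
      refine mul_nonneg (Finset.prod_nonneg fun k _ => ?_) (Finset.prod_nonneg fun l _ => ?_)
      · have := abs_le.mp (hCu k); linarith
      · have := abs_le.mp (hCv l); linarith
    have hmono : MonotoneOn (fun z => s * Q.eval z) (Icc C₀ (R - C₀)) :=
      mono_of_deriv hQd gap_nonneg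
    have hbump : (R/4)^(p+q) * ((R/2+1) - R/2) ≤ s * Q.eval (R/2+1) - s * Q.eval (R/2) := by
      apply incr_of_deriv_ge (by linarith) hQd
      intro t ht
      obtain ⟨h1, h2⟩ := ht
      have e1 : (R/4:ℝ)^p ≤ ∏ k, (t - u k) := by
        have := prod_ge_const (fun k => t - u k) (R/4) (by linarith) (fun k => by
          have := abs_le.mp (hCu k); linarith)
        rwa [Fintype.card_fin] at this
      have e2 : (R/4:ℝ)^q ≤ ∏ l, (v l + R - t) := by
        have := prod_ge_const (fun l => v l + R - t) (R/4) (by linarith) (fun l => by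
          have := abs_le.mp (hCv l); linarith)
        rwa [Fintype.card_fin] at this
      have h40 : (0:ℝ) ≤ (R/4)^p := pow_nonneg (by linarith) p
      calc (R/4:ℝ)^(p+q) = (R/4)^p * (R/4)^q := pow_add _ _ _
      _ ≤ _ := mul_le_mul e1 e2 (pow_nonneg (by linarith) q) (le_trans h40 e1)
    have hc1n : (0:ℝ) ≤ (2*C₀)^p * (R+2*C₀)^q :=
      mul_nonneg (pow_nonneg (by linarith) _) (pow_nonneg (by linarith) _)
    have hc2n : (0:ℝ) ≤ (2*C₀)^q * (R+2*C₀)^p :=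
      mul_nonneg (pow_nonneg (by linarith) _) (pow_nonneg (by linarith) _)
    have hedge1 : |s * Q.eval C₀ - s * Q.eval (u i)| ≤ ((2*C₀)^p * (R+2*C₀)^q) * (2*C₀) := by
      have key := mvt_bound (a := -C₀) (b := C₀)
        (f := fun z => s * Q.eval z)
        (f' := fun t => s * ((cpoly u).eval t * M.eval t))
        (fun t _ => hQd' t)
        (fun t ht => by
          have ht' : |t| ≤ C₀ := abs_le.mpr (Set.mem_Icc.mp ht)
          have habs : |s * ((cpoly u).eval t * M.eval t)|
              = |(cpoly u).eval t| * |M.eval t| := by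
            rw [abs_mul, hs, abs_pow, abs_neg, abs_one, one_pow, one_mul, abs_mul]
          rw [habs]
          exact mul_le_mul (hLabs t ht') (hMabs R (by linarith) t ht') (abs_nonneg _) (pow_nonneg (by linarith) _))
        (Set.mem_Icc.mpr (abs_le.mp (hCu i)))
        (Set.mem_Icc.mpr ⟨by linarith, le_rfl⟩)
      have hd : |C₀ - u i| ≤ 2*C₀ := by
        have h1 := abs_le.mp (hCu i)
        rw [abs_le]; constructor <;> linarith
      calc |s * Q.eval C₀ - s * Q.eval (u i)| ≤ ((2*C₀)^p * (R+2*C₀)^q) * |C₀ - u i| := key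
      _ ≤ _ := mul_le_mul_of_nonneg_left hd hc1n
    have hedge2 : |s * Q.eval (-C₀ + R) - s * Q.eval (v j + R)|
        ≤ ((2*C₀)^q * (R+2*C₀)^p) * (2*C₀) := by
      have key := mvt_bound (a := -C₀) (b := C₀)
        (f := fun y => s * Q.eval (y + R))
        (f' := fun y => s * ((cpoly u).eval (y + R) * (cpoly v).eval y))
        (fun y _ => by
          have h1 := (hshiftDeriv (cpoly u * M) R y).const_mul s
          have e : (cpoly u * M).eval (y + R)
              = (cpoly u).eval (y + R) * (cpoly v).eval y := by
            rw [eval_mul, hM, hMshift]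
          rw [e] at h1
          exact h1)
        (fun y hy => by
          have hy' : |y| ≤ C₀ := abs_le.mpr (Set.mem_Icc.mp hy)
          have habs : |s * ((cpoly u).eval (y + R) * (cpoly v).eval y)|
              = |(cpoly v).eval y| * |(cpoly u).eval (y + R)| := by
            rw [abs_mul, hs, abs_pow, abs_neg, abs_one, one_pow, one_mul, abs_mul, mul_comm]
          rw [habs]
          exact mul_le_mul (hNabs y hy') (hLshift_abs R (by linarith) y hy')
            (abs_nonneg _) (pow_nonneg (by linarith) _))
        (Set.mem_Icc.mpr (abs_le.mp (hCv j)))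
        (Set.mem_Icc.mpr ⟨le_rfl, by linarith⟩)
      have hd : |(-C₀) - v j| ≤ 2*C₀ := by
        have h1 := abs_le.mp (hCv j)
        rw [abs_le]; constructor <;> linarith
      calc |s * Q.eval (-C₀ + R) - s * Q.eval (v j + R)|
          ≤ ((2*C₀)^q * (R+2*C₀)^p) * |(-C₀) - v j| := key
      _ ≤ _ := mul_le_mul_of_nonneg_left hd hc2n
    have h_mono1 : s * Q.eval C₀ ≤ s * Q.eval (R/2) :=
      hmono (Set.mem_Icc.mpr ⟨le_rfl, by linarith⟩)
        (Set.mem_Icc.mpr ⟨by linarith, by linarith⟩) (by linarith)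
    have h_mono2 : s * Q.eval (R/2+1) ≤ s * Q.eval (R - C₀) :=
      hmono (Set.mem_Icc.mpr ⟨by linarith, by linarith⟩)
        (Set.mem_Icc.mpr ⟨by linarith, le_rfl⟩) (by linarith)
    have hpow1 : ((2*C₀)^p * (R+2*C₀)^q) * (2*C₀) ≤ K1 * R^(p+q-1) := by
      have h2C : R + 2*C₀ ≤ 2*R := by linarith
      have hP1 : (R+2*C₀)^q ≤ (2*R)^q := pow_le_pow_left₀ (by linarith) h2C q
      calc ((2*C₀)^p * (R+2*C₀)^q) * (2*C₀) ≤ ((2*C₀)^p * (2*R)^q) * (2*C₀) := by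
            apply mul_le_mul_of_nonneg_right _ (by linarith)
            exact mul_le_mul_of_nonneg_left hP1 (pow_nonneg (by linarith) _)
      _ = K1 * R^q := by rw [hK1, mul_pow]; ring
      _ ≤ K1 * R^(p+q-1) := mul_le_mul_of_nonneg_left (pow_le_pow_right₀ hR1 (by omega)) hK1n
    have hpow2 : ((2*C₀)^q * (R+2*C₀)^p) * (2*C₀) ≤ K2 * R^(p+q-1) := by
      have h2C : R + 2*C₀ ≤ 2*R := by linarith
      have hP1 : (R+2*C₀)^p ≤ (2*R)^p := pow_le_pow_left₀ (by linarith) h2C p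
      calc ((2*C₀)^q * (R+2*C₀)^p) * (2*C₀) ≤ ((2*C₀)^q * (2*R)^p) * (2*C₀) := by
            apply mul_le_mul_of_nonneg_right _ (by linarith)
            exact mul_le_mul_of_nonneg_left hP1 (pow_nonneg (by linarith) _)
      _ = K2 * R^p := by rw [hK2, mul_pow]; ring
      _ ≤ K2 * R^(p+q-1) := mul_le_mul_of_nonneg_left (pow_le_pow_right₀ hR1 (by omega)) hK2n
    have hbig : K1 * R^(p+q-1) + K2 * R^(p+q-1) < (R/4)^(p+q) := by
      have h44 : (0:ℝ) < (4:ℝ)^(p+q) := by positivity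
      have e : ((R:ℝ)/4)^(p+q) = R^(p+q-1) * (R / 4^(p+q)) := by
        rw [show p+q = (p+q-1)+1 from by omega, div_pow, pow_succ, pow_succ]
        rw [Nat.add_sub_cancel]
        ring
      rw [e]
      have hKR : K1 + K2 < R / 4^(p+q) := by
        rw [lt_div_iff₀ h44]
        calc (K1+K2) * 4^(p+q) = 4^(p+q) * (K1+K2) := by ring
        _ < R := by
            have := hRK
            rw [show ((p:ℕ)+q) = (p+q-1)+1 from by omega] at this ⊢
            exact this
      have hRp1 : (0:ℝ) < R^(p+q-1) := pow_pos (by linarith) _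
      nlinarith
    have hbump' : (R/4:ℝ)^(p+q) ≤ s * Q.eval (R/2+1) - s * Q.eval (R/2) := by
      have e : (R/4:ℝ)^(p+q) * ((R/2+1) - R/2) = (R/4)^(p+q) := by ring
      linarith [hbump, e]
    obtain ⟨a1, a2⟩ := abs_le.mp hedge1
    obtain ⟨b1, b2⟩ := abs_le.mp hedge2
    have e2 : -C₀ + R = R - C₀ := by ring
    rw [e2] at b1 b2
    show s * Q.eval (u i) < s * Q.eval (v j + R)
    linarith
  exact F1.and (F2.and (F3.and F4))

end glue

lemma pint_coeff_high (P : ℝ[X]) (n : ℕ) (hdeg : P.natDegree ≤ n) {N : ℕ} (hN : n + 1 < N) :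
    (pint P).coeff N = 0 := by
  obtain ⟨N, rfl⟩ : ∃ M, N = M + 1 := ⟨N - 1, by omega⟩
  have h := coeff_derivative (pint P) N
  rw [derivative_pint] at h
  have hz : P.coeff N = 0 := coeff_eq_zero_of_natDegree_lt (by omega)
  have : ((N:ℝ) + 1) ≠ 0 := by positivity
  field_simp [hz] at h
  rw [hz] at h
  exact (mul_eq_zero.mp h.symm).resolve_right this

lemma pint_coeff_top (P : ℝ[X]) (n : ℕ) : (pint P).coeff (n + 1) = P.coeff n / ((n:ℝ)+1) := by
  have h := coeff_derivative (pint P) n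
  rw [derivative_pint] at h
  have : ((n:ℝ) + 1) ≠ 0 := by positivity
  field_simp [h]
  exact h.symm

lemma pintQ (P : ℝ[X]) (n : ℕ) (hP : P.Monic) (hdeg : P.natDegree = n) :
    (C ((n:ℝ)+1) * pint P).Monic ∧ (C ((n:ℝ)+1) * pint P).natDegree = n + 1 := by
  have hne : ((n:ℝ)+1) ≠ 0 := by positivity
  have hc : (pint P).coeff (n+1) = 1 / ((n:ℝ)+1) := by
    rw [pint_coeff_top P n, ← hdeg, Polynomial.Monic.coeff_natDegree hP, hdeg]
  have hd : (C ((n:ℝ)+1) * pint P).natDegree = n + 1 := by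
    refine le_antisymm ?_ (le_natDegree_of_ne_zero ?_)
    · rw [natDegree_le_iff_coeff_eq_zero]
      intro N hN
      rw [coeff_C_mul, pint_coeff_high P n (le_of_eq hdeg) hN, mul_zero]
    · rw [coeff_C_mul, hc]
      field_simp
      exact one_ne_zero
  refine ⟨?_, hd⟩
  unfold Polynomial.Monic Polynomial.leadingCoeff
  rw [hd, coeff_C_mul, hc]
  field_simp


lemma cpoly_monic {n : ℕ} (r : Fin n → ℝ) : (cpoly r).Monic :=
  monic_prod_of_monic _ _ fun i _ => monic_X_sub_C _

lemma cpoly_natDegree {n : ℕ} (r : Fin n → ℝ) : (cpoly r).natDegree = n := by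
  unfold cpoly
  rw [Polynomial.natDegree_prod]
  · simp
  · intro i _; exact (monic_X_sub_C _).ne_zero


def EndsDown {n : ℕ} (σ : Equiv.Perm (Fin n)) : Prop :=
  ∀ _ : 2 ≤ n, σ ⟨n-1, by omega⟩ < σ ⟨n-2, by omega⟩

def pcompl {n : ℕ} (σ : Equiv.Perm (Fin n)) : Equiv.Perm (Fin n) :=
  σ.trans Fin.revPerm

/-- value function at ℕ level -/
def sval {n : ℕ} (σ : Equiv.Perm (Fin n)) (a : ℕ) : ℕ :=
  if h : a < n then (σ ⟨a, h⟩).val else 0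

lemma sval_lt_iff {n : ℕ} (σ : Equiv.Perm (Fin n)) {a b : ℕ} (ha : a < n) (hb : b < n) :
    sval σ a < sval σ b ↔ σ ⟨a, ha⟩ < σ ⟨b, hb⟩ := by
  rw [sval, sval, dif_pos ha, dif_pos hb, Fin.lt_def]

lemma sval_lt {n : ℕ} (σ : Equiv.Perm (Fin n)) {a : ℕ} (ha : a < n) : sval σ a < n := by
  rw [sval, dif_pos ha]; exact (σ _).isLt

lemma sval_inj {n : ℕ} (σ : Equiv.Perm (Fin n)) {a b : ℕ} (ha : a < n) (hb : b < n)
    (h : a ≠ b) : sval σ a ≠ sval σ b := by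
  rw [sval, sval, dif_pos ha, dif_pos hb]
  intro hh
  exact h (congrArg Fin.val (σ.injective (Fin.ext hh)))

lemma alt_sval {n : ℕ} {σ : Equiv.Perm (Fin n)} (h : IsAlternating σ) :
    ∀ i, i + 2 < n → (sval σ i < sval σ (i+1) ↔ sval σ (i+2) < sval σ (i+1)) := by
  intro i h2
  rw [sval_lt_iff σ (by omega) (by omega), sval_lt_iff σ (by omega) (by omega)]
  exact h i h2

lemma ends_sval {n : ℕ} {σ : Equiv.Perm (Fin n)} (hed : EndsDown σ) (hn : 2 ≤ n) :
    sval σ (n-1) < sval σ (n-2) := by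
  rw [sval_lt_iff σ (by omega) (by omega)]
  exact hed hn

lemma alt_pattern {n : ℕ} {σ : Equiv.Perm (Fin n)} (h : IsAlternating σ) (hed : EndsDown σ) :
    ∀ k, k + 1 < n → (sval σ k < sval σ (k+1) ↔ (n - k) % 2 = 1) := by
  intro k hk
  generalize hD : n - 2 - k = d
  induction d generalizing k with
  | zero =>
    have hkeq : k = n - 2 := by omega
    have hend := ends_sval hed (by omega)
    subst hkeq
    have e : n - 2 + 1 = n - 1 := by omega
    rw [e]
    omega
  | succ d ih =>
    have hk2 : k + 2 < n := by omega
    have h1 := alt_sval h k hk2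
    have h2 := ih (k+1) hk2 (by omega)
    have e : k + 1 + 1 = k + 2 := rfl
    rw [e] at h2
    have hne : sval σ (k+1) ≠ sval σ (k+2) := sval_inj σ (by omega) (by omega) (by omega)
    omega

/-! ### values of direct and skew sums -/

lemma dsum_sval {p q : ℕ} (π : Equiv.Perm (Fin p)) (τ : Equiv.Perm (Fin q)) (a : ℕ)
    (ha : a < p + q) :
    sval (permDirectSum π τ) a = if a < p then sval π a else p + sval τ (a - p) := by
  rw [sval, dif_pos ha]
  split_ifs with h
  · have : (⟨a, ha⟩ : Fin (p+q)) = Fin.castAdd q ⟨a, h⟩ := rfl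
    rw [this, sval, dif_pos h]
    simp only [permDirectSum, Equiv.trans_apply, Equiv.sumCongr_apply,
      finSumFinEquiv_symm_apply_castAdd, Sum.map_inl, finSumFinEquiv_apply_left,
      Fin.coe_castAdd]
  · have h' : a - p < q := by omega
    have : (⟨a, ha⟩ : Fin (p+q)) = Fin.natAdd p ⟨a - p, h'⟩ := by
      apply Fin.ext; simp; omega
    rw [this, sval, dif_pos h']
    simp only [permDirectSum, Equiv.trans_apply, Equiv.sumCongr_apply,
      finSumFinEquiv_symm_apply_natAdd, Sum.map_inr, finSumFinEquiv_apply_right,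
      Fin.coe_natAdd]

lemma ssum_sval {p q : ℕ} (π : Equiv.Perm (Fin p)) (τ : Equiv.Perm (Fin q)) (a : ℕ)
    (ha : a < p + q) :
    sval (permSkewSum π τ) a = if a < p then q + sval π a else sval τ (a - p) := by
  rw [sval, dif_pos ha]
  split_ifs with h
  · have : (⟨a, ha⟩ : Fin (p+q)) = Fin.castAdd q ⟨a, h⟩ := rfl
    rw [this, sval, dif_pos h]
    simp only [permSkewSum, Equiv.trans_apply, Equiv.sumCongr_apply,
      finSumFinEquiv_symm_apply_castAdd, Sum.map_inl, Equiv.sumComm_apply, Sum.swap_inl,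
      finSumFinEquiv_apply_right, finCongr_apply, Fin.coe_cast, Fin.coe_natAdd]
  · have h' : a - p < q := by omega
    have : (⟨a, ha⟩ : Fin (p+q)) = Fin.natAdd p ⟨a - p, h'⟩ := by
      apply Fin.ext; simp; omega
    rw [this, sval, dif_pos h']
    simp only [permSkewSum, Equiv.trans_apply, Equiv.sumCongr_apply,
      finSumFinEquiv_symm_apply_natAdd, Sum.map_inr, Equiv.sumComm_apply, Sum.swap_inr,
      finSumFinEquiv_apply_left, finCongr_apply, Fin.coe_cast, Fin.coe_castAdd]

lemma sval_pcompl {n : ℕ} (σ : Equiv.Perm (Fin n)) {a : ℕ} (ha : a < n) :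
    sval (pcompl σ) a = n - 1 - sval σ a := by
  rw [sval, sval, dif_pos ha, dif_pos ha]
  simp [pcompl, Fin.rev]
  omega

lemma pcompl_lt {n : ℕ} (σ : Equiv.Perm (Fin n)) {i j : Fin n} :
    pcompl σ i < pcompl σ j ↔ σ j < σ i := Fin.rev_lt_rev

lemma pcompl_pcompl {n : ℕ} (σ : Equiv.Perm (Fin n)) : pcompl (pcompl σ) = σ := by
  ext i
  simp [pcompl, Fin.rev_rev]

lemma perm_ext_sval {n : ℕ} {f g : Equiv.Perm (Fin n)}
    (h : ∀ a, a < n → sval f a = sval g a) : f = g := by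
  apply Equiv.ext
  intro x
  apply Fin.ext
  have := h x.val x.isLt
  rwa [sval, sval, dif_pos x.isLt, dif_pos x.isLt, Fin.eta] at this

lemma pcompl_dsum {p q : ℕ} (π : Equiv.Perm (Fin p)) (τ : Equiv.Perm (Fin q)) :
    pcompl (permDirectSum π τ) = permSkewSum (pcompl π) (pcompl τ) := by
  apply perm_ext_sval
  intro a ha
  rw [sval_pcompl _ ha, dsum_sval _ _ _ ha, ssum_sval _ _ _ ha]
  split_ifs with h
  · rw [sval_pcompl _ h]
    have := sval_lt π h
    omega
  · have h' : a - p < q := by omega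
    rw [sval_pcompl _ h']
    have := sval_lt τ h'
    omega

lemma pcompl_ssum {p q : ℕ} (π : Equiv.Perm (Fin p)) (τ : Equiv.Perm (Fin q)) :
    pcompl (permSkewSum π τ) = permDirectSum (pcompl π) (pcompl τ) := by
  apply perm_ext_sval
  intro a ha
  rw [sval_pcompl _ ha, dsum_sval _ _ _ ha, ssum_sval _ _ _ ha]
  split_ifs with h
  · rw [sval_pcompl _ h]
    have := sval_lt π h
    omega
  · have h' : a - p < q := by omega
    rw [sval_pcompl _ h']
    have := sval_lt τ h'
    omega

lemma isAlternating_pcompl {n : ℕ} {σ : Equiv.Perm (Fin n)} (h : IsAlternating σ) :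
    IsAlternating (pcompl σ) := by
  intro i h2
  have key : sval (pcompl σ) i < sval (pcompl σ) (i+1) ↔
      sval (pcompl σ) (i+2) < sval (pcompl σ) (i+1) := by
    rw [sval_pcompl σ (by omega), sval_pcompl σ (by omega), sval_pcompl σ (by omega)]
    have h1 := alt_sval h i h2
    have e1 := sval_inj σ (a := i) (b := i+1) (by omega) (by omega) (by omega)
    have e2 := sval_inj σ (a := i+2) (b := i+1) h2 (by omega) (by omega)
    have l1 := sval_lt σ (a := i) (by omega)
    have l2 := sval_lt σ (a := i+1) (by omega)
    have l3 := sval_lt σ (a := i+2) h2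
    omega
  rw [sval_lt_iff _ (by omega) (by omega), sval_lt_iff _ h2 (by omega)] at key
  exact key

lemma dsum_transfer {p q : ℕ} (hp : 1 ≤ p) (hq : 1 ≤ q) {π : Equiv.Perm (Fin p)}
    {τ : Equiv.Perm (Fin q)} (halt : IsAlternating (permDirectSum π τ))
    (hed : EndsDown (permDirectSum π τ)) :
    q % 2 = 0 ∧ IsAlternating π ∧ EndsDown π ∧ IsAlternating τ ∧ EndsDown τ := by
  set σ := permDirectSum π τ with hσ
  have hE : ∀ a, a < p + q → sval σ a = if a < p then sval π a else p + sval τ (a - p) :=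
    fun a ha => dsum_sval π τ a ha
  have hqe : q % 2 = 0 := by
    have hpat := alt_pattern halt hed (p-1) (by omega)
    have e : p - 1 + 1 = p := by omega
    rw [e] at hpat
    have E1 : sval σ (p-1) = sval π (p-1) := by rw [hE _ (by omega), if_pos (by omega)]
    have E2 : sval σ p = p + sval τ 0 := by rw [hE _ (by omega), if_neg (by omega)]; simp
    have l1 := sval_lt π (a := p-1) (by omega)
    omega
  refine ⟨hqe, ?_, ?_, ?_, ?_⟩
  · intro i h2
    have key : sval π i < sval π (i+1) ↔ sval π (i+2) < sval π (i+1) := by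
      have h1 := alt_sval halt i (by omega)
      rw [hE _ (by omega), hE _ (by omega), hE _ (by omega),
        if_pos (by omega), if_pos (by omega), if_pos (by omega)] at h1
      exact h1
    rw [sval_lt_iff _ (by omega) (by omega), sval_lt_iff _ h2 (by omega)] at key
    exact key
  · intro h2
    have key : sval π (p-1) < sval π (p-2) := by
      have hpat := alt_pattern halt hed (p-2) (by omega)
      have e : p - 2 + 1 = p - 1 := by omega
      rw [e] at hpat
      rw [hE _ (by omega), hE _ (by omega), if_pos (by omega), if_pos (by omega)] at hpat
      have hne := sval_inj π (a := p-2) (b := p-1) (by omega) (by omega) (by omega)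
      omega
    rw [sval_lt_iff _ (by omega) (by omega)] at key
    exact key
  · intro i h2
    have key : sval τ i < sval τ (i+1) ↔ sval τ (i+2) < sval τ (i+1) := by
      have h1 := alt_sval halt (p+i) (by omega)
      have e1 : p + i + 1 = p + (i+1) := by omega
      have e2 : p + i + 2 = p + (i+2) := by omega
      rw [e1, e2] at h1
      rw [hE _ (by omega), hE _ (by omega), hE _ (by omega),
        if_neg (by omega), if_neg (by omega), if_neg (by omega)] at h1
      have f1 : p + i - p = i := by omega
      have f2 : p + (i+1) - p = i+1 := by omega
      have f3 : p + (i+2) - p = i+2 := by omega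
      rw [f1, f2, f3] at h1
      omega
    rw [sval_lt_iff _ (by omega) (by omega), sval_lt_iff _ h2 (by omega)] at key
    exact key
  · intro h2
    have key : sval τ (q-1) < sval τ (q-2) := by
      have hend := ends_sval hed (by omega)
      rw [hE _ (by omega), hE _ (by omega), if_neg (by omega), if_neg (by omega)] at hend
      have f1 : p + q - 1 - p = q - 1 := by omega
      have f2 : p + q - 2 - p = q - 2 := by omega
      rw [f1, f2] at hend
      omega
    rw [sval_lt_iff _ (by omega) (by omega)] at key
    exact key

lemma ssum_transfer {p q : ℕ} (hp : 1 ≤ p) (hq : 1 ≤ q) {π : Equiv.Perm (Fin p)}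
    {τ : Equiv.Perm (Fin q)} (halt : IsAlternating (permSkewSum π τ))
    (hed : EndsDown (permSkewSum π τ)) :
    q % 2 = 1 ∧ IsAlternating (pcompl π) ∧ EndsDown (pcompl π) ∧
      IsAlternating τ ∧ EndsDown τ := by
  set σ := permSkewSum π τ with hσ
  have hE : ∀ a, a < p + q → sval σ a = if a < p then q + sval π a else sval τ (a - p) :=
    fun a ha => ssum_sval π τ a ha
  have hqe : q % 2 = 1 := by
    have hpat := alt_pattern halt hed (p-1) (by omega)
    have e : p - 1 + 1 = p := by omega
    rw [e] at hpat
    have E1 : sval σ (p-1) = q + sval π (p-1) := by rw [hE _ (by omega), if_pos (by omega)]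
    have E2 : sval σ p = sval τ 0 := by rw [hE _ (by omega), if_neg (by omega)]; simp
    have l1 := sval_lt τ (a := 0) (by omega)
    omega
  have haltπ : IsAlternating π := by
    intro i h2
    have key : sval π i < sval π (i+1) ↔ sval π (i+2) < sval π (i+1) := by
      have h1 := alt_sval halt i (by omega)
      rw [hE _ (by omega), hE _ (by omega), hE _ (by omega),
        if_pos (by omega), if_pos (by omega), if_pos (by omega)] at h1
      omega
    rw [sval_lt_iff _ (by omega) (by omega), sval_lt_iff _ h2 (by omega)] at key
    exact key
  refine ⟨hqe, isAlternating_pcompl haltπ, ?_, ?_, ?_⟩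
  · intro h2
    have key : sval (pcompl π) (p-1) < sval (pcompl π) (p-2) := by
      rw [sval_pcompl _ (by omega), sval_pcompl _ (by omega)]
      have hpat := alt_pattern halt hed (p-2) (by omega)
      have e : p - 2 + 1 = p - 1 := by omega
      rw [e] at hpat
      rw [hE _ (by omega), hE _ (by omega), if_pos (by omega), if_pos (by omega)] at hpat
      have hne := sval_inj π (a := p-2) (b := p-1) (by omega) (by omega) (by omega)
      have l1 := sval_lt π (a := p-1) (by omega)
      have l2 := sval_lt π (a := p-2) (by omega)
      omega
    rw [sval_lt_iff _ (by omega) (by omega)] at key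
    exact key
  · intro i h2
    have key : sval τ i < sval τ (i+1) ↔ sval τ (i+2) < sval τ (i+1) := by
      have h1 := alt_sval halt (p+i) (by omega)
      have e1 : p + i + 1 = p + (i+1) := by omega
      have e2 : p + i + 2 = p + (i+2) := by omega
      rw [e1, e2] at h1
      rw [hE _ (by omega), hE _ (by omega), hE _ (by omega),
        if_neg (by omega), if_neg (by omega), if_neg (by omega)] at h1
      have f1 : p + i - p = i := by omega
      have f2 : p + (i+1) - p = i+1 := by omega
      have f3 : p + (i+2) - p = i+2 := by omega
      rw [f1, f2, f3] at h1
      omega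
    rw [sval_lt_iff _ (by omega) (by omega), sval_lt_iff _ h2 (by omega)] at key
    exact key
  · intro h2
    have key : sval τ (q-1) < sval τ (q-2) := by
      have hend := ends_sval hed (by omega)
      rw [hE _ (by omega), hE _ (by omega), if_neg (by omega), if_neg (by omega)] at hend
      have f1 : p + q - 1 - p = q - 1 := by omega
      have f2 : p + q - 2 - p = q - 2 := by omega
      rw [f1, f2] at hend
      omega
    rw [sval_lt_iff _ (by omega) (by omega)] at key
    exact key

variable {p q : ℕ} (π : Equiv.Perm (Fin p)) (τ : Equiv.Perm (Fin q))

lemma dsum_val_l (i : Fin p) : ((permDirectSum π τ) (Fin.castAdd q i)).val = (π i).val := by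
  simp [permDirectSum]

lemma dsum_val_r (j : Fin q) : ((permDirectSum π τ) (Fin.natAdd p j)).val = p + (τ j).val := by
  simp [permDirectSum]

lemma ssum_val_l (i : Fin p) : ((permSkewSum π τ) (Fin.castAdd q i)).val = q + (π i).val := by
  simp [permSkewSum]
  omega

lemma ssum_val_r (j : Fin q) : ((permSkewSum π τ) (Fin.natAdd p j)).val = (τ j).val := by
  simp [permSkewSum]

lemma dsum_lt_ll (i i' : Fin p) :
    permDirectSum π τ (Fin.castAdd q i) < permDirectSum π τ (Fin.castAdd q i') ↔ π i < π i' := by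
  rw [Fin.lt_def, dsum_val_l, dsum_val_l, ← Fin.lt_def]

lemma dsum_lt_rr (j j' : Fin q) :
    permDirectSum π τ (Fin.natAdd p j) < permDirectSum π τ (Fin.natAdd p j') ↔ τ j < τ j' := by
  rw [Fin.lt_def, dsum_val_r, dsum_val_r, Fin.lt_def]
  omega

lemma dsum_lt_lr (i : Fin p) (j : Fin q) :
    permDirectSum π τ (Fin.castAdd q i) < permDirectSum π τ (Fin.natAdd p j) := by
  rw [Fin.lt_def, dsum_val_l, dsum_val_r]
  have := (π i).isLt
  omega

lemma dsum_not_lt_rl (i : Fin p) (j : Fin q) :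
    ¬ permDirectSum π τ (Fin.natAdd p j) < permDirectSum π τ (Fin.castAdd q i) := by
  rw [Fin.lt_def, dsum_val_l, dsum_val_r]
  have := (π i).isLt
  omega

lemma ssum_lt_ll (i i' : Fin p) :
    permSkewSum π τ (Fin.castAdd q i) < permSkewSum π τ (Fin.castAdd q i') ↔ π i < π i' := by
  rw [Fin.lt_def, ssum_val_l, ssum_val_l, Fin.lt_def]
  omega

lemma ssum_lt_rr (j j' : Fin q) :
    permSkewSum π τ (Fin.natAdd p j) < permSkewSum π τ (Fin.natAdd p j') ↔ τ j < τ j' := by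
  rw [Fin.lt_def, ssum_val_r, ssum_val_r, Fin.lt_def]

lemma ssum_lt_rl (i : Fin p) (j : Fin q) :
    permSkewSum π τ (Fin.natAdd p j) < permSkewSum π τ (Fin.castAdd q i) := by
  rw [Fin.lt_def, ssum_val_l, ssum_val_r]
  have := (τ j).isLt
  omega

lemma ssum_not_lt_lr (i : Fin p) (j : Fin q) :
    ¬ permSkewSum π τ (Fin.castAdd q i) < permSkewSum π τ (Fin.natAdd p j) := by
  rw [Fin.lt_def, ssum_val_l, ssum_val_r]
  have := (τ j).isLt
  omega

lemma realizes_single : Realizes (fun _ : Fin 1 => (0:ℝ)) (Equiv.refl (Fin 1)) := by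
  constructor
  · intro a b h
    rw [Subsingleton.elim a b] at h
    exact absurd h (lt_irrefl _)
  · intro i j
    rw [Subsingleton.elim i j]
    simp

lemma pcompl_single : pcompl (Equiv.refl (Fin 1)) = Equiv.refl (Fin 1) := by
  apply Equiv.ext
  intro x
  apply Subsingleton.elim

lemma sep_pos {n : ℕ} {σ : Equiv.Perm (Fin n)} (h : PermSeparable σ) : 1 ≤ n := by
  induction h with
  | single => omega
  | dsum h1 h2 ih1 ih2 => omega
  | ssum h1 h2 ih1 ih2 => omega

lemma build_dsum {p q : ℕ} (hp : 1 ≤ p) (hq : 1 ≤ q) (π : Equiv.Perm (Fin p))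
    (τ : Equiv.Perm (Fin q))
    (hπ : IsAlternating π → EndsDown π → ∃ u, Realizes u π)
    (hτ : IsAlternating τ → EndsDown τ → ∃ v, Realizes v τ)
    (halt : IsAlternating (permDirectSum π τ)) (hed : EndsDown (permDirectSum π τ)) :
    ∃ w, Realizes w (permDirectSum π τ) := by
  obtain ⟨hq2, haπ, heπ, haτ, heτ⟩ := dsum_transfer hp hq halt hed
  obtain ⟨u, hu, hu2⟩ := hπ haπ heπ
  obtain ⟨v, hv, hv2⟩ := hτ haτ heτ
  obtain ⟨R, hmono, H2, H3, H4⟩ := (glue_core u v hp hq hu hv).exists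
  have hs : ((-1:ℝ))^q = 1 := Even.neg_one_pow (Nat.even_iff.mpr hq2)
  rw [hs] at H2 H4
  simp only [one_mul] at H2 H4
  refine ⟨_, hmono, ?_⟩
  intro k k'
  induction k using Fin.addCases with
  | left i =>
    induction k' using Fin.addCases with
    | left i' =>
      rw [dsum_lt_ll]
      constructor
      · intro h
        rcases lt_trichotomy (π i) (π i') with hlt | heq | hgt
        · exact hlt
        · have : i = i' := π.injective heq
          subst this
          exact absurd h (lt_irrefl _)
        · exact absurd (H2 i' i ((hu2 i' i).mpr hgt)) (asymm h)
      · intro h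
        exact H2 i i' ((hu2 i i').mpr h)
    | right j =>
      exact iff_of_true (H4 i j) (dsum_lt_lr π τ i j)
  | right j =>
    induction k' using Fin.addCases with
    | left i' =>
      exact iff_of_false (asymm (H4 i' j)) (dsum_not_lt_rl π τ i' j)
    | right j' =>
      rw [dsum_lt_rr]
      constructor
      · intro h
        rcases lt_trichotomy (τ j) (τ j') with hlt | heq | hgt
        · exact hlt
        · have : j = j' := τ.injective heq
          subst this
          exact absurd h (lt_irrefl _)
        · exact absurd (H3 j' j ((hv2 j' j).mpr hgt)) (asymm h)
      · intro h
        exact H3 j j' ((hv2 j j').mpr h)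

lemma build_ssum {p q : ℕ} (hp : 1 ≤ p) (hq : 1 ≤ q) (π : Equiv.Perm (Fin p))
    (τ : Equiv.Perm (Fin q))
    (hπc : IsAlternating (pcompl π) → EndsDown (pcompl π) → ∃ u, Realizes u (pcompl π))
    (hτ : IsAlternating τ → EndsDown τ → ∃ v, Realizes v τ)
    (halt : IsAlternating (permSkewSum π τ)) (hed : EndsDown (permSkewSum π τ)) :
    ∃ w, Realizes w (permSkewSum π τ) := by
  obtain ⟨hq2, haπc, heπc, haτ, heτ⟩ := ssum_transfer hp hq halt hed
  obtain ⟨u, hu, hu2⟩ := hπc haπc heπc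
  obtain ⟨v, hv, hv2⟩ := hτ haτ heτ
  obtain ⟨R, hmono, H2, H3, H4⟩ := (glue_core u v hp hq hu hv).exists
  have hs : ((-1:ℝ))^q = -1 := Odd.neg_one_pow (Nat.odd_iff.mpr hq2)
  rw [hs] at H2 H4
  simp only [neg_one_mul, neg_lt_neg_iff] at H2 H4
  refine ⟨_, hmono, ?_⟩
  intro k k'
  induction k using Fin.addCases with
  | left i =>
    induction k' using Fin.addCases with
    | left i' =>
      rw [ssum_lt_ll]
      constructor
      · intro h
        rcases lt_trichotomy (π i) (π i') with hlt | heq | hgt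
        · exact hlt
        · have : i = i' := π.injective heq
          subst this
          exact absurd h (lt_irrefl _)
        · have hc : pcompl π i < pcompl π i' := (pcompl_lt π).mpr hgt
          exact absurd (H2 i i' ((hu2 i i').mpr hc)) (asymm h)
      · intro h
        have hc : pcompl π i' < pcompl π i := (pcompl_lt π).mpr h
        exact H2 i' i ((hu2 i' i).mpr hc)
    | right j =>
      exact iff_of_false (asymm (H4 i j)) (ssum_not_lt_lr π τ i j)
  | right j =>
    induction k' using Fin.addCases with
    | left i' =>
      exact iff_of_true (H4 i' j) (ssum_lt_rl π τ i' j)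
    | right j' =>
      rw [ssum_lt_rr]
      constructor
      · intro h
        rcases lt_trichotomy (τ j) (τ j') with hlt | heq | hgt
        · exact hlt
        · have : j = j' := τ.injective heq
          subst this
          exact absurd h (lt_irrefl _)
        · exact absurd (H3 j' j ((hv2 j' j).mpr hgt)) (asymm h)
      · intro h
        exact H3 j j' ((hv2 j j').mpr h)

lemma main_realize {n : ℕ} {σ : Equiv.Perm (Fin n)} (hsep : PermSeparable σ) :
    (IsAlternating σ → EndsDown σ → ∃ r, Realizes r σ) ∧
    (IsAlternating (pcompl σ) → EndsDown (pcompl σ) → ∃ r, Realizes r (pcompl σ)) := by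
  induction hsep with
  | single =>
    constructor
    · intro _ _
      exact ⟨_, realizes_single⟩
    · rw [pcompl_single]
      intro _ _
      exact ⟨_, realizes_single⟩
  | @dsum p q π τ hπ hτ IHπ IHτ =>
    have hp : 1 ≤ p := sep_pos hπ
    have hq : 1 ≤ q := sep_pos hτ
    constructor
    · exact build_dsum hp hq π τ IHπ.1 IHτ.1
    · rw [pcompl_dsum]
      have hπc : IsAlternating (pcompl (pcompl π)) → EndsDown (pcompl (pcompl π)) →
          ∃ u, Realizes u (pcompl (pcompl π)) := by
        rw [pcompl_pcompl]
        exact IHπ.1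
      exact build_ssum hp hq (pcompl π) (pcompl τ) hπc IHτ.2
  | @ssum p q π τ hπ hτ IHπ IHτ =>
    have hp : 1 ≤ p := sep_pos hπ
    have hq : 1 ≤ q := sep_pos hτ
    constructor
    · exact build_ssum hp hq π τ IHπ.2 IHτ.1
    · rw [pcompl_ssum]
      exact build_dsum hp hq (pcompl π) (pcompl τ) IHπ.2 IHτ.2

lemma main {n : ℕ} (σ : Equiv.Perm (Fin n)) (hsep : PermSeparable σ)
    (halt : IsAlternating σ) (hed : EndsDown σ) :
    ∃ r : Fin n → ℝ, Realizes r σ :=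
  (main_realize hsep).1 halt hed


theorem stmt_1 (m : ℕ) (hm : 1 ≤ m) (σ : Equiv.Perm (Fin (m + 1)))
    (hsep : PermSeparable σ) (halt : IsAlternating σ)
    (hlast : σ ⟨m, by omega⟩ < σ ⟨m - 1, by omega⟩) :
    ∃ Q : Polynomial ℝ, Q.Monic ∧ Q.natDegree = m + 2 ∧
      ∃ r : Fin (m + 1) → ℝ, StrictMono r ∧
        (∀ y : ℝ, Q.derivative.eval y = 0 ↔ ∃ i : Fin (m + 1), r i = y) ∧
        Function.Injective (fun i : Fin (m + 1) => Q.eval (r i)) ∧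
        (∀ i j : Fin (m + 1), Q.eval (r i) < Q.eval (r j) ↔ σ i < σ j) := by
  have hed : EndsDown σ := by
    intro h
    convert hlast using 3 <;> omega
  obtain ⟨r, hmono, hreal⟩ := main σ hsep halt hed
  set P := cpoly r with hPdef
  have hP : P.Monic := cpoly_monic r
  have hdeg : P.natDegree = m + 1 := cpoly_natDegree r
  set Q : ℝ[X] := C (((m+1:ℕ):ℝ)+1) * pint P with hQdef
  have hpos : (0:ℝ) < ((m+1:ℕ):ℝ)+1 := by positivity
  obtain ⟨hQm, hQd⟩ := pintQ P (m+1) hP hdeg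
  have hQm' : Q.Monic := by rw [hQdef]; convert hQm using 3
  have hQd' : Q.natDegree = m + 2 := by rw [hQdef]; convert hQd using 2
  refine ⟨Q, hQm', by omega, r, hmono, ?_, ?_, ?_⟩
  · intro y
    have hder : Q.derivative = C (((m+1:ℕ):ℝ)+1) * P := by
      rw [hQdef, derivative_C_mul, derivative_pint]
    rw [hder]
    simp only [eval_mul, eval_C, hPdef, cpoly, eval_prod, eval_sub, eval_X]
    rw [mul_eq_zero]
    constructor
    · rintro (h | h)
      · exact absurd h (by positivity)
      · obtain ⟨i, _, hi⟩ := Finset.prod_eq_zero_iff.mp h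
        exact ⟨i, by linarith [sub_eq_zero.mp hi]⟩
    · rintro ⟨i, rfl⟩
      right
      exact Finset.prod_eq_zero (Finset.mem_univ i) (by simp)
  · intro i j hij
    simp only [hQdef, eval_mul, eval_C] at hij
    have h2 : vmap r i = vmap r j := by
      have := mul_left_cancel₀ (ne_of_gt hpos) hij
      exact this
    have h3 : σ i = σ j := by
      rcases lt_trichotomy (σ i) (σ j) with h | h | h
      · rw [← hreal i j] at h; simp only [vmap] at h h2; linarith
      · exact h
      · rw [← hreal j i] at h; simp only [vmap] at h h2; linarith
    exact σ.injective h3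
  · intro i j
    rw [← hreal i j]
    simp only [hQdef, eval_mul, eval_C]
    exact mul_lt_mul_iff_right₀ hpos
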